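/- (Avoidance of countable products.) Let μ = supₙ μₙ be singular of cofinality ω with μₙ strictly increasing uncountable regular cardinals. Suppose Aₙ ⊆ [μₙ, μₙ₊₁) is countable for each n, and q is a normal condition in Q. Then there is a condition q' ≤ q in Q such that for every n ∈ a(q'), Aₙ ∩ (χ⁻_{q'}(n), χ⁺_{q'}(n)) = ∅. -/

import Mathlib

/-!
Each block `q ∩ [μ_{mₙ}, μ_{mₙ+1})` of a normal condition has order type `μₙ + 1`. Since `q` is
closed, the top point `t` of the block is a limit of the block, and since `cof μₙ = μₙ` is
uncountable, the countably many points of `A` below `t` are all passed by some point `s` of the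
block. Keeping only `q ∩ (s, t]` from every block leaves a set of size `μ`, still closed because
the blocks are separated, whose interval `(χ⁻, χ⁺)` on each block lies in `(s, t)` and so
misses `A`.
-/

open Cardinal Set

noncomputable section

/-- Cardinality of a set of ordinals. -/
def scard (s : Set Ordinal.{0}) : Cardinal.{1} := Cardinal.mk s

/-- The set of accumulation points of a set of ordinals `p`:
ordinals `α` such that `p ∩ α` is nonempty and unbounded in `α`. -/
def accSet (p : Set Ordinal.{0}) : Set Ordinal.{0} :=
  {α | (p ∩ Set.Iio α).Nonempty ∧ α = sSup (p ∩ Set.Iio α)}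

/-- A set of ordinals is closed iff it contains all of its accumulation
points below its supremum. -/
def IsClosedCond (q : Set Ordinal.{0}) : Prop :=
  accSet q ∩ Set.Iio (sSup q) ⊆ q

/-- Order type of a set of ordinals. -/
def otp (s : Set Ordinal.{0}) : Ordinal.{1} :=
  Ordinal.type ((· < ·) : s → s → Prop)

/-- Membership in the poset `P`: subsets of `μ` of cardinality `μ`. -/
def InP (μ : Cardinal.{0}) (p : Set Ordinal.{0}) : Prop :=
  p ⊆ Set.Iio μ.ord ∧ scard p = Cardinal.lift.{1,0} μ

/-- The almost-inclusion ordering: `p₁ ≤ p₂` iff `|p₁ \ p₂| < μ`. -/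
def condLe (μ : Cardinal.{0}) (p₁ p₂ : Set Ordinal.{0}) : Prop :=
  scard (p₁ \ p₂) < Cardinal.lift.{1,0} μ

/-- Membership in the poset `Q`: closed subsets of `μ` of cardinality `μ`. -/
def InQ (μ : Cardinal.{0}) (q : Set Ordinal.{0}) : Prop :=
  InP μ q ∧ IsClosedCond q

/-- The interval `[μₙ, μₙ₊₁)`. -/
def interval (μseq : ℕ → Cardinal.{0}) (n : ℕ) : Set Ordinal.{0} :=
  Set.Ico ((μseq n).ord) ((μseq (n+1)).ord)

/-- `a(q) = {n : q ∩ [μₙ, μₙ₊₁) ≠ ∅}`. -/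
def aSet (μseq : ℕ → Cardinal.{0}) (q : Set Ordinal.{0}) : Set ℕ :=
  {n | (q ∩ interval μseq n).Nonempty}

/-- Normality: letting `⟨mₙ⟩` enumerate `a(q)` increasingly,
`otp (q ∩ [μ_{mₙ}, μ_{mₙ+1})) = μₙ + 1`. -/
def IsNormalCond (μseq : ℕ → Cardinal.{0}) (q : Set Ordinal.{0}) : Prop :=
  ∃ m : ℕ → ℕ, StrictMono m ∧ Set.range m = aSet μseq q ∧
    ∀ n, otp (q ∩ interval μseq (m n)) = Ordinal.lift.{1,0} ((μseq n).ord + 1)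

/-- `χ⁺_q(n) = sup (q ∩ [μₙ, μₙ₊₁))`. -/
def chiP (μseq : ℕ → Cardinal.{0}) (q : Set Ordinal.{0}) (n : ℕ) : Ordinal.{0} :=
  sSup (q ∩ interval μseq n)

/-- `χ⁻_q(n) = min (q ∩ [μₙ, μₙ₊₁))`. -/
def chiM (μseq : ℕ → Cardinal.{0}) (q : Set Ordinal.{0}) (n : ℕ) : Ordinal.{0} :=
  sInf (q ∩ interval μseq n)

/-- `μₙ` is a strictly increasing sequence of regular cardinals with supremum `μ`. -/
def GoodSeq (μ : Cardinal.{0}) (μseq : ℕ → Cardinal.{0}) : Prop :=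
  StrictMono μseq ∧ (∀ n, (μseq n).IsRegular) ∧ μ = ⨆ n, μseq n

theorem accSet_mono {p q : Set Ordinal.{0}} (h : p ⊆ q) : accSet p ⊆ accSet q := by
  rintro α ⟨⟨x, hx⟩, hα⟩
  have hbdd : BddAbove (q ∩ Iio α) := ⟨α, fun _ hy => hy.2.le⟩
  refine ⟨⟨x, h hx.1, hx.2⟩, le_antisymm ?_ (csSup_le ⟨x, h hx.1, hx.2⟩ fun _ hy => hy.2.le)⟩
  calc α = sSup (p ∩ Iio α) := hα
    _ ≤ sSup (q ∩ Iio α) := csSup_le_csSup hbdd ⟨x, hx⟩ (inter_subset_inter_left _ h)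

theorem sSup_mem_accSet {C : Set Ordinal.{0}} (hne : C.Nonempty) (hbdd : BddAbove C)
    (hnotMem : sSup C ∉ C) : sSup C ∈ accSet C := by
  have hC : C ∩ Iio (sSup C) = C := inter_eq_left.2 fun x hx =>
    (le_csSup hbdd hx).lt_of_ne fun h => hnotMem (h ▸ hx)
  exact ⟨hC.symm ▸ hne, by rw [hC]⟩

/-- In a closed set, a nonempty segment `q ∩ [l, t)` without a largest element is cofinal in
`t ∈ q`: otherwise its supremum would be an accumulation point of `q` lying in the segment. -/
theorem IsClosedCond.exists_gt_of_noMax {q : Set Ordinal.{0}} (hq : IsClosedCond q)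
    (hbdd : BddAbove q) {l t : Ordinal.{0}} (ht : t ∈ q) (hne : (q ∩ Ico l t).Nonempty)
    (hnoMax : ∀ x ∈ q ∩ Ico l t, ∃ y ∈ q ∩ Ico l t, x < y) :
    ∀ a < t, ∃ x ∈ q ∩ Ico l t, a < x := by
  by_contra! ⟨a, hat, ha⟩
  set C := q ∩ Ico l t
  have hCa : sSup C ≤ a := csSup_le hne ha
  have hCbdd : BddAbove C := ⟨a, ha⟩
  have hnotMem : sSup C ∉ C := fun hmem => by
    obtain ⟨y, hy, hlt⟩ := hnoMax _ hmem
    exact (le_csSup hCbdd hy).not_gt hlt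
  have hmem : sSup C ∈ q := hq ⟨accSet_mono inter_subset_left (sSup_mem_accSet hne hCbdd hnotMem),
    (hCa.trans_lt hat).trans_le (le_csSup hbdd ht)⟩
  obtain ⟨x, hx⟩ := hne
  exact hnotMem ⟨hmem, hx.2.1.trans (le_csSup hCbdd hx), hCa.trans_lt hat⟩

/-- An accumulation point `α` of `q ∩ ⋃ₙ (sₙ, tₙ]` lies in the last interval meeting `Iio α`,
since all earlier intervals lie below that one. -/
theorem IsClosedCond.inter_iUnion_Ioc {q : Set Ordinal.{0}} (hq : IsClosedCond q)
    (hbdd : BddAbove q) {s t : ℕ → Ordinal.{0}} (hsep : ∀ ⦃k n⦄, k < n → t k ≤ s n) :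
    IsClosedCond (q ∩ ⋃ n, Ioc (s n) (t n)) := by
  rintro α ⟨⟨⟨x, hx⟩, hα⟩, hαlt⟩
  obtain ⟨z, hz, hαz⟩ := exists_lt_of_lt_csSup ⟨x, hx.1⟩ hαlt
  obtain ⟨j, hj⟩ := mem_iUnion.1 hz.2
  set N := {n | ∃ y ∈ q ∩ Ioc (s n) (t n), y < α}
  have hNj : ∀ n ∈ N, n ≤ j := by
    rintro n ⟨y, hy, hyα⟩
    by_contra! hjn
    exact (hyα.trans (hαz.trans_le hj.2)).not_ge ((hsep hjn).trans hy.2.1.le)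
  have hxN : ∃ n, n ∈ N := by
    obtain ⟨k, hk⟩ := mem_iUnion.1 hx.1.2
    exact ⟨k, x, ⟨hx.1.1, hk⟩, hx.2⟩
  obtain ⟨y, hy, hyα⟩ : sSup N ∈ N := Nat.sSup_mem hxN ⟨j, hNj⟩
  set n := sSup N
  have hαt : α ≤ t n := by
    rw [hα]
    refine csSup_le ⟨x, hx⟩ fun w ⟨hw, hwα⟩ => ?_
    obtain ⟨k, hk⟩ := mem_iUnion.1 hw.2
    have hkn : k ≤ n := le_csSup ⟨j, hNj⟩ ⟨w, ⟨hw.1, hk⟩, hwα⟩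
    rcases hkn.lt_or_eq with hkn | rfl
    · exact hk.2.trans ((hsep hkn).trans (hy.2.1.trans_le hy.2.2).le)
    · exact hk.2
  have hαq : α ∈ q := hq ⟨accSet_mono inter_subset_left ⟨⟨x, hx⟩, hα⟩,
    hαlt.trans_le (csSup_le_csSup hbdd ⟨x, hx.1⟩ inter_subset_left)⟩
  exact ⟨hαq, mem_iUnion.2 ⟨n, hy.2.1.trans hyα, hαt⟩⟩

theorem exists_strictMonoOn_of_otp_eq {T : Set Ordinal.{0}} {o : Ordinal.{0}}
    (h : otp T = Ordinal.lift.{1} o) :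
    ∃ F : Ordinal.{0} → Ordinal.{0}, StrictMonoOn F (Iio o) ∧ F '' Iio o = T := by
  rw [← Ordinal.typein_ordinal] at h
  obtain ⟨e⟩ := Ordinal.type_eq.1 h
  let e' : Iio o ≃o T := (OrderIso.ofRelIsoLT e).symm
  refine ⟨fun γ => if hγ : γ ∈ Iio o then e' ⟨γ, hγ⟩ else 0, fun a ha b hb hab => ?_, ?_⟩
  · simp only [dif_pos ha, dif_pos hb, Subtype.coe_lt_coe]
    exact e'.strictMono (show (⟨a, ha⟩ : Iio o) < ⟨b, hb⟩ from hab)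
  · ext x
    constructor
    · rintro ⟨γ, hγ, rfl⟩
      simp only [dif_pos hγ, Subtype.coe_prop]
    · intro hx
      refine ⟨e'.symm ⟨x, hx⟩, (e'.symm ⟨x, hx⟩).2, ?_⟩
      simp only [dif_pos (e'.symm ⟨x, hx⟩).2, Subtype.coe_eta, OrderIso.apply_symm_apply]

theorem lift_le_mk_Ioo_ord {c : Cardinal.{0}} (hc : ℵ₀ ≤ c) {δ : Ordinal.{0}} (hδ : δ < c.ord) :
    Cardinal.lift.{1} c ≤ #(Ioo δ c.ord) := by
  have hshift : ∀ γ < c.ord, δ + 1 + γ ∈ Ioo δ c.ord := fun γ hγ =>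
    ⟨(Order.lt_add_one_iff.2 le_rfl).trans_le le_self_add,
      Ordinal.isPrincipal_add_ord hc ((isSuccLimit_ord hc).add_one_lt hδ) hγ⟩
  calc Cardinal.lift.{1} c = #(Iio c.ord) := by rw [Cardinal.mk_Iio_ordinal, card_ord]
    _ ≤ #(Ioo δ c.ord) := Cardinal.mk_le_of_injective (f := fun γ => ⟨_, hshift γ.1 γ.2⟩)
        fun a b hab => Subtype.ext (add_left_cancel (congrArg Subtype.val hab))

theorem IsClosedCond.exists_lt_apply_of_lt_apply {q : Set Ordinal.{0}} (hq : IsClosedCond q)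
    (hbdd : BddAbove q) {l u o : Ordinal.{0}} (ho : Order.IsSuccLimit o)
    {F : Ordinal.{0} → Ordinal.{0}} (hF : StrictMonoOn F (Iio (o + 1)))
    (hFT : F '' Iio (o + 1) = q ∩ Ico l u) : ∀ a < F o, ∃ γ < o, a < F γ := by
  have hdom : ∀ {γ}, γ ≤ o → γ ∈ Iio (o + 1) := Order.lt_add_one_iff.2
  have hmem : ∀ γ ≤ o, F γ ∈ q ∩ Ico l u := fun γ hγ => hFT ▸ mem_image_of_mem F (hdom hγ)
  have hseg : ∀ x ∈ q ∩ Ico l (F o), ∃ γ < o, F γ = x := by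
    rintro x ⟨hxq, hlx, hxt⟩
    obtain ⟨γ, hγ, rfl⟩ : x ∈ F '' Iio (o + 1) := hFT ▸ ⟨hxq, hlx, hxt.trans (hmem o le_rfl).2.2⟩
    exact ⟨γ, (hF.lt_iff_lt hγ (hdom le_rfl)).1 hxt, rfl⟩
  have hFseg : ∀ γ < o, F γ ∈ q ∩ Ico l (F o) := fun γ hγ =>
    ⟨(hmem γ hγ.le).1, (hmem γ hγ.le).2.1, hF (hdom hγ.le) (hdom le_rfl) hγ⟩
  have hnoMax : ∀ x ∈ q ∩ Ico l (F o), ∃ y ∈ q ∩ Ico l (F o), x < y := by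
    intro x hx
    obtain ⟨γ, hγ, rfl⟩ := hseg x hx
    have hγ1 := ho.add_one_lt hγ
    exact ⟨F (γ + 1), hFseg _ hγ1, hF (hdom hγ.le) (hdom hγ1.le) (Order.lt_add_one_iff.2 le_rfl)⟩
  intro a ha
  obtain ⟨x, hx, hax⟩ :=
    hq.exists_gt_of_noMax hbdd (hmem o le_rfl).1 ⟨_, hFseg 0 ho.bot_lt⟩ hnoMax a ha
  obtain ⟨γ, hγ, rfl⟩ := hseg x hx
  exact ⟨γ, hγ, hax⟩

theorem scard_inter_Ioc_eq {q : Set Ordinal.{0}} {l u : Ordinal.{0}} {c : Cardinal.{0}}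
    (hc : ℵ₀ ≤ c) {F : Ordinal.{0} → Ordinal.{0}} (hF : StrictMonoOn F (Iio (c.ord + 1)))
    (hFT : F '' Iio (c.ord + 1) = q ∩ Ico l u) {δ : Ordinal.{0}} (hδ : δ < c.ord) :
    scard (q ∩ Ioc (F δ) (F c.ord)) = Cardinal.lift.{1} c := by
  have hdom : ∀ {γ}, γ ≤ c.ord → γ ∈ Iio (c.ord + 1) := Order.lt_add_one_iff.2
  have hmem : ∀ γ ≤ c.ord, F γ ∈ q ∩ Ico l u := fun γ hγ => hFT ▸ mem_image_of_mem F (hdom hγ)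
  apply le_antisymm
  · calc scard (q ∩ Ioc (F δ) (F c.ord)) ≤ #(F '' Iio (c.ord + 1)) :=
          mk_le_mk_of_subset (hFT ▸ fun x hx =>
            ⟨hx.1, (hmem δ hδ.le).2.1.trans hx.2.1.le, hx.2.2.trans_lt (hmem _ le_rfl).2.2⟩)
      _ ≤ #(Iio (c.ord + 1)) := mk_image_le
      _ = Cardinal.lift.{1} c := by
        rw [Cardinal.mk_Iio_ordinal, Ordinal.card_add, card_ord, Ordinal.card_one,
          add_one_eq hc]
  · calc Cardinal.lift.{1} c ≤ #(Ioo δ c.ord) := lift_le_mk_Ioo_ord hc hδ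
      _ = #(F '' Ioo δ c.ord) :=
          (mk_image_eq_of_injOn _ _ (hF.injOn.mono fun γ hγ => hdom hγ.2.le)).symm
      _ ≤ scard (q ∩ Ioc (F δ) (F c.ord)) := mk_le_mk_of_subset (by
          rintro _ ⟨γ, hγ, rfl⟩
          exact ⟨(hmem γ hγ.2.le).1, hF (hdom hδ.le) (hdom hγ.2.le) hγ.1,
            (hF (hdom hγ.2.le) (hdom le_rfl) hγ.2).le⟩)

theorem exists_Ioc_avoiding_countable {q : Set Ordinal.{0}} (hq : IsClosedCond q)
    (hbdd : BddAbove q) {l u : Ordinal.{0}} {ν : Cardinal.{0}} (hν : ν.IsRegular) (hνω : ℵ₀ < ν)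
    (hT : otp (q ∩ Ico l u) = Ordinal.lift.{1} (ν.ord + 1)) {B : Set Ordinal.{0}}
    (hB : B.Countable) :
    ∃ s t, l ≤ s ∧ s < t ∧ t < u ∧ t ∈ q ∧ scard (q ∩ Ioc s t) = Cardinal.lift.{1} ν ∧
      ∀ b ∈ B, b < t → b ≤ s := by
  obtain ⟨F, hF, hFT⟩ := exists_strictMonoOn_of_otp_eq hT
  have hdom : ∀ {γ}, γ ≤ ν.ord → γ ∈ Iio (ν.ord + 1) := Order.lt_add_one_iff.2
  have hmem : ∀ γ ≤ ν.ord, F γ ∈ q ∩ Ico l u := fun γ hγ => hFT ▸ mem_image_of_mem F (hdom hγ)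
  set t := F ν.ord
  choose γ hγ hbγ using fun b : ↥(B ∩ Iio t) =>
    hq.exists_lt_apply_of_lt_apply hbdd (isSuccLimit_ord hν.aleph0_le) hF hFT b b.2.2
  have hδ : ⨆ b, γ b < ν.ord := by
    refine Ordinal.lift_iSup_lt_of_lt_cof ?_ hγ
    rw [← Ordinal.lift_cof, hν.cof_ord, Cardinal.lift_id'.{0, 1}]
    have : Countable ↥(B ∩ Iio t) := (hB.mono inter_subset_left).to_subtype
    have hlift : Cardinal.lift.{1} ℵ₀ < Cardinal.lift.{1} ν := Cardinal.lift_lt.2 hνω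
    exact mk_le_aleph0.trans_lt (by simpa using hlift)
  set δ := ⨆ b, γ b
  refine ⟨F δ, t, (hmem δ hδ.le).2.1, hF (hdom hδ.le) (hdom le_rfl) hδ, (hmem _ le_rfl).2.2,
    (hmem _ le_rfl).1, scard_inter_Ioc_eq hν.aleph0_le hF hFT hδ, fun b hb hbt => ?_⟩
  have hbδ : γ ⟨b, hb, hbt⟩ ≤ δ := le_ciSup ⟨ν.ord, by rintro _ ⟨c, rfl⟩; exact (hγ c).le⟩ _
  exact (hbγ ⟨b, hb, hbt⟩).le.trans ((hF.le_iff_le (hdom (hγ _).le) (hdom hδ.le)).2 hbδ)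

theorem eq_of_mem_interval {μseq : ℕ → Cardinal.{0}} (hμ : Monotone μseq) {x : Ordinal.{0}}
    {k j : ℕ} (hk : x ∈ interval μseq k) (hj : x ∈ interval μseq j) : k = j := by
  have hord : ∀ {a b}, a < b → x ∈ interval μseq a → x ∉ interval μseq b := fun hab ha hb =>
    (ha.2.trans_le (ord_le_ord.2 (hμ (Nat.succ_le_of_lt hab)))).not_ge hb.1
  rcases lt_trichotomy k j with h | h | h
  · exact absurd hj (hord h hk)
  · exact h
  · exact absurd hk (hord h hj)

theorem condLe_of_subset {μ : Cardinal.{0}} (hμ : μ ≠ 0) {p q : Set Ordinal.{0}} (h : p ⊆ q) :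
    condLe μ p q := by
  rw [condLe, scard, sdiff_eq_empty.2 h, mk_eq_zero, pos_iff_ne_zero, Ne, Cardinal.lift_eq_zero]
  exact hμ

theorem inter_Ioo_sInf_sSup_eq_empty {q B : Set Ordinal.{0}} {s t : Ordinal.{0}} (ht : t ∈ q)
    (hst : s < t) (hB : ∀ b ∈ B, b < t → b ≤ s) :
    B ∩ Ioo (sInf (q ∩ Ioc s t)) (sSup (q ∩ Ioc s t)) = ∅ := by
  have htop : IsGreatest (q ∩ Ioc s t) t := ⟨⟨ht, hst, le_rfl⟩, fun _ hx => hx.2.2⟩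
  have hbot : s < sInf (q ∩ Ioc s t) := (csInf_mem htop.nonempty).2.1
  rw [htop.csSup_eq, eq_empty_iff_forall_notMem]
  exact fun b ⟨hb, hlt, hbt⟩ => ((hB b hb hbt).trans_lt hbot).not_gt hlt

theorem inter_iUnion_Ioc_inter_interval {μseq : ℕ → Cardinal.{0}} (hμ : Monotone μseq)
    {m : ℕ → ℕ} (hm : Function.Injective m) {s t : ℕ → Ordinal.{0}}
    (hIoc : ∀ n, Ioc (s n) (t n) ⊆ interval μseq (m n)) (q : Set Ordinal.{0}) (n : ℕ) :
    (q ∩ ⋃ k, Ioc (s k) (t k)) ∩ interval μseq (m n) = q ∩ Ioc (s n) (t n) := by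
  refine subset_antisymm (fun x ⟨⟨hxq, hx⟩, hxn⟩ => ?_) fun x hx =>
    ⟨⟨hx.1, mem_iUnion.2 ⟨n, hx.2⟩⟩, hIoc n hx.2⟩
  obtain ⟨k, hk⟩ := mem_iUnion.1 hx
  obtain rfl := hm (eq_of_mem_interval hμ (hIoc k hk) hxn)
  exact ⟨hxq, hk⟩

theorem aSet_inter_iUnion_Ioc {μseq : ℕ → Cardinal.{0}} (hμ : Monotone μseq) {m : ℕ → ℕ}
    {s t : ℕ → Ordinal.{0}} (hIoc : ∀ n, Ioc (s n) (t n) ⊆ interval μseq (m n))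
    {q : Set Ordinal.{0}} (ht : ∀ n, t n ∈ q) (hst : ∀ n, s n < t n) :
    aSet μseq (q ∩ ⋃ n, Ioc (s n) (t n)) = range m := by
  ext k
  refine ⟨fun ⟨x, ⟨_, hx⟩, hxk⟩ => ?_, ?_⟩
  · obtain ⟨n, hn⟩ := mem_iUnion.1 hx
    exact ⟨n, eq_of_mem_interval hμ (hIoc n hn) hxk⟩
  · rintro ⟨n, rfl⟩
    exact ⟨t n, ⟨ht n, mem_iUnion.2 ⟨n, hst n, le_rfl⟩⟩, hIoc n ⟨hst n, le_rfl⟩⟩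

theorem stmt_8_general (μ : Cardinal.{0}) (hinf : Cardinal.aleph0 < μ)
    (μseq : ℕ → Cardinal.{0}) (hseq : GoodSeq μ μseq)
    (hunc : ∀ n, Cardinal.aleph0 < μseq n)
    (A : ℕ → Set Ordinal.{0})
    (hA : ∀ n, A n ⊆ interval μseq n ∧ (A n).Countable)
    (q : Set Ordinal.{0}) (hq : InQ μ q) (hn : IsNormalCond μseq q) :
    ∃ q' : Set Ordinal.{0}, InQ μ q' ∧ condLe μ q' q ∧
      ∀ n ∈ aSet μseq q', A n ∩ Set.Ioo (chiM μseq q' n) (chiP μseq q' n) = ∅ := by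
  obtain ⟨⟨hqμ, hqcard⟩, hqC⟩ := hq
  obtain ⟨hmono, hreg, hsup⟩ := hseq
  obtain ⟨m, hm, -, hotp⟩ := hn
  have hbdd : BddAbove q := ⟨μ.ord, fun _ hx => (hqμ hx).le⟩
  choose s t hls hst htu htq hcard hB using fun n =>
    exists_Ioc_avoiding_countable hqC hbdd (hreg n) (hunc n) (hotp n) (hA (m n)).2
  have hIoc : ∀ n, Ioc (s n) (t n) ⊆ interval μseq (m n) := fun n _ hx =>
    ⟨(hls n).trans hx.1.le, hx.2.trans_lt (htu n)⟩
  have hsep : ∀ ⦃k n⦄, k < n → t k ≤ s n := fun k n hkn =>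
    ((htu k).trans_le (ord_le_ord.2 (hmono.monotone (Nat.succ_le_of_lt (hm hkn))))).le.trans
      (hls n)
  set q' := q ∩ ⋃ n, Ioc (s n) (t n)
  have hq'card : scard q' = Cardinal.lift.{1} μ := by
    refine le_antisymm ((mk_le_mk_of_subset inter_subset_left).trans hqcard.le) ?_
    rw [hsup, Cardinal.lift_iSup Cardinal.bddAbove_of_small]
    exact ciSup_le fun n => (hcard n).ge.trans
      (mk_le_mk_of_subset (inter_subset_inter_right _ (subset_iUnion_of_subset n subset_rfl)))
  refine ⟨q', ⟨⟨fun x hx => hqμ hx.1, hq'card⟩, hqC.inter_iUnion_Ioc hbdd hsep⟩,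
    condLe_of_subset (aleph0_pos.trans hinf).ne' inter_subset_left, ?_⟩
  rw [aSet_inter_iUnion_Ioc hmono.monotone hIoc htq hst]
  rintro _ ⟨n, rfl⟩
  rw [chiM, chiP, inter_iUnion_Ioc_inter_interval hmono.monotone hm.injective hIoc]
  exact inter_Ioo_sInf_sSup_eq_empty (htq n) (hst n) (hB n)

/-- Avoidance of countable products: if  is
countable for each  and  is normal, then some  in  satisfies
 for all . -/
theorem stmt_8 (μ : Cardinal.{0}) (hinf : Cardinal.aleph0 < μ)
    (hcof : μ.ord.cof = Cardinal.aleph0)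
    (μseq : ℕ → Cardinal.{0}) (hseq : GoodSeq μ μseq)
    (hunc : ∀ n, Cardinal.aleph0 < μseq n)
    (A : ℕ → Set Ordinal.{0})
    (hA : ∀ n, A n ⊆ interval μseq n ∧ (A n).Countable)
    (q : Set Ordinal.{0}) (hq : InQ μ q) (hn : IsNormalCond μseq q) :
    ∃ q' : Set Ordinal.{0}, InQ μ q' ∧ condLe μ q' q ∧
      ∀ n ∈ aSet μseq q', A n ∩ Set.Ioo (chiM μseq q' n) (chiP μseq q' n) = ∅ :=
  stmt_8_general μ hinf μseq hseq hunc A hA q hq hn
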